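/- Let A be an n×n real symmetric matrix with nonnegative entries and zero diagonal (the adjacency matrix of a simple undirected graph), and let β > 0 and δ > 0 be real constants with λ₁(A) < δ/β, where λ₁(A) denotes the largest eigenvalue of A. Let p : ℝ → ℝⁿ be a differentiable function satisfying, for all t ≥ 0 and all i, dp_i/dt = (1 − p_i(t)) β ∑_{j=1}^n a_{ij} p_j(t) − δ p_i(t), with p_i(t) ∈ [0,1] for all i and all t ≥ 0. Then there exist ε > 0 and α > 0 such that ‖p(t)‖ ≤ α ‖p(0)‖ e^{−εt} for all t ≥ 0, where ‖·‖ is the Euclidean norm; in particular the initial infection converges to zero exponentially fast. -/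

import Mathlib

/-!
Below the epidemic threshold the squared norm of the infection vector is a Lyapunov function.
Along a solution with `0 ≤ p`, dropping the nonpositive term `-β p_i² (A p)_i` gives
`⟪p, ṗ⟫ ≤ β ⟪p, A p⟫ - δ ‖p‖² ≤ -(δ - β λ₁) ‖p‖²` by the Rayleigh bound for `A`, so Grönwall's
inequality makes `‖p t‖²` decay at rate `2 (δ - β λ₁)`.
-/

open Matrix

theorem exists_lt_forall_le_of_forall_lt {ι α : Type*} [Finite ι] [LinearOrder α] [NoMinOrder α]
    {f : ι → α} {b : α} (h : ∀ i, f i < b) : ∃ c < b, ∀ i, f i ≤ c := by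
  cases isEmpty_or_nonempty ι
  · obtain ⟨c, hc⟩ := exists_lt b
    exact ⟨c, hc, isEmptyElim⟩
  · obtain ⟨i, hi⟩ := Finite.exists_max f
    exact ⟨f i, h i, hi⟩

open scoped MatrixOrder in
theorem Matrix.IsHermitian.dotProduct_mulVec_le {ι : Type*} [Fintype ι] [DecidableEq ι]
    {A : Matrix ι ι ℝ} (hA : A.IsHermitian) {μ : ℝ} (h : ∀ i, hA.eigenvalues i ≤ μ)
    (x : ι → ℝ) : x ⬝ᵥ A *ᵥ x ≤ μ * (x ⬝ᵥ x) := by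
  have hle : A ≤ algebraMap ℝ _ μ := by
    refine le_algebraMap_of_spectrum_le ?_ hA.isSelfAdjoint
    rw [hA.spectrum_real_eq_range_eigenvalues]
    rintro _ ⟨i, rfl⟩
    exact h i
  simpa [sub_mulVec, Algebra.algebraMap_eq_smul_one, smul_mulVec] using
    (Matrix.le_iff.mp hle).dotProduct_mulVec_nonneg x

theorem PiLp.hasDerivAt_of_forall_apply {ι : Type*} [Fintype ι] {E : ι → Type*}
    [∀ i, NormedAddCommGroup (E i)] [∀ i, NormedSpace ℝ (E i)] (q : ENNReal) [Fact (1 ≤ q)]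
    {f : ℝ → PiLp q E} {f' : PiLp q E} {t : ℝ}
    (h : ∀ i, HasDerivAt (fun s => f s i) (f' i) t) : HasDerivAt f f' t :=
  (PiLp.continuousLinearEquiv q ℝ E).symm.hasFDerivAt.comp_hasDerivAt t (hasDerivAt_pi.2 h)

theorem le_mul_exp_of_hasDerivAt_le_mul {V V' : ℝ → ℝ} {K : ℝ}
    (hV : ∀ s ≥ 0, HasDerivAt V (V' s) s) (hV' : ∀ s ≥ 0, V' s ≤ K * V s) {t : ℝ} (ht : 0 ≤ t) :
    V t ≤ V 0 * Real.exp (K * t) := by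
  have hcont : ContinuousOn V (Set.Icc 0 t) := fun s hs =>
    (hV s hs.1).continuousAt.continuousWithinAt
  have hslope : ∀ s ∈ Set.Ico 0 t, ∀ r, V' s < r →
      ∃ᶠ z in nhdsWithin s (Set.Ioi s), (z - s)⁻¹ * (V z - V s) < r := fun s hs _ hr =>
    (hV s hs.1).hasDerivWithinAt.liminf_right_slope_le hr
  simpa [gronwallBound_ε0] using le_gronwallBound_of_liminf_deriv_right_le hcont hslope le_rfl
    (fun s hs => (hV' s hs.1).trans_eq (add_zero _).symm) t ⟨ht, le_rfl⟩

theorem norm_le_mul_exp_of_inner_deriv_le {E : Type*} [NormedAddCommGroup E]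
    [InnerProductSpace ℝ E] {f f' : ℝ → E} {ε : ℝ} (hf : ∀ s ≥ 0, HasDerivAt f (f' s) s)
    (hdiss : ∀ s ≥ 0, inner ℝ (f s) (f' s) ≤ -ε * ‖f s‖ ^ 2) {t : ℝ} (ht : 0 ≤ t) :
    ‖f t‖ ≤ ‖f 0‖ * Real.exp (-ε * t) := by
  have hsq : ‖f t‖ ^ 2 ≤ ‖f 0‖ ^ 2 * Real.exp (-(2 * ε) * t) :=
    le_mul_exp_of_hasDerivAt_le_mul (fun s hs => (hf s hs).norm_sq)
      (fun s hs => by linarith [hdiss s hs]) ht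
  have hexp : Real.exp (-(2 * ε) * t) = Real.exp (-ε * t) ^ 2 := by
    rw [← Real.exp_nat_mul]
    ring_nf
  rw [hexp, ← mul_pow] at hsq
  exact (pow_le_pow_iff_left₀ (norm_nonneg _) (by positivity) two_ne_zero).mp hsq

section SIS

variable {ι : Type*} [Fintype ι] {A : Matrix ι ι ℝ} {β : ℝ}

def sisVectorField (A : Matrix ι ι ℝ) (β δ : ℝ) (x : ι → ℝ) : ι → ℝ :=
  fun i => (1 - x i) * β * (A *ᵥ x) i - δ * x i

theorem dotProduct_sisVectorField_le (δ : ℝ) (hA : ∀ i j, 0 ≤ A i j) (hβ : 0 ≤ β) {x : ι → ℝ}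
    (hx : 0 ≤ x) : x ⬝ᵥ sisVectorField A β δ x ≤ β * (x ⬝ᵥ A *ᵥ x) - δ * (x ⬝ᵥ x) := by
  simp only [dotProduct, sisVectorField, Finset.mul_sum, ← Finset.sum_sub_distrib]
  refine Finset.sum_le_sum fun i _ => ?_
  have hAx : 0 ≤ (A *ᵥ x) i := Finset.sum_nonneg fun j _ => mul_nonneg (hA i j) (hx j)
  nlinarith [mul_nonneg (mul_nonneg hβ hAx) (sq_nonneg (x i))]

theorem dotProduct_sisVectorField_le_neg_mul [DecidableEq ι] (δ : ℝ) (hA : A.IsHermitian)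
    (hAnonneg : ∀ i j, 0 ≤ A i j) (hβ : 0 ≤ β) {μ : ℝ} (hμ : ∀ i, hA.eigenvalues i ≤ μ)
    {x : ι → ℝ} (hx : 0 ≤ x) :
    x ⬝ᵥ sisVectorField A β δ x ≤ -(δ - β * μ) * (x ⬝ᵥ x) := by
  have hray := mul_le_mul_of_nonneg_left (hA.dotProduct_mulVec_le hμ x) hβ
  linarith [dotProduct_sisVectorField_le δ hAnonneg hβ hx]

end SIS

theorem sis_homogeneous_exponential_stability_general
    {n : ℕ} (A : Matrix (Fin n) (Fin n) ℝ)
    (hA : A.IsHermitian) (hAnonneg : ∀ i j, 0 ≤ A i j)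
    (β δ : ℝ) (hβ : 0 < β)
    (hspec : ∀ i, hA.eigenvalues i < δ / β)
    (p : ℝ → EuclideanSpace ℝ (Fin n))
    (hode : ∀ t ≥ (0 : ℝ), ∀ i, HasDerivAt (fun s => p s i)
      ((1 - p t i) * β * (∑ j, A i j * p t j) - δ * p t i) t)
    (hrange : ∀ t ≥ (0 : ℝ), ∀ i, p t i ∈ Set.Icc (0 : ℝ) 1) :
    ∃ ε > (0 : ℝ), ∃ α > (0 : ℝ), ∀ t ≥ (0 : ℝ),
      ‖p t‖ ≤ α * ‖p 0‖ * Real.exp (-ε * t) := by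
  obtain ⟨μ, hμδ, hμ⟩ := exists_lt_forall_le_of_forall_lt hspec
  have hε : 0 < δ - β * μ := by
    rw [lt_div_iff₀' hβ] at hμδ
    linarith
  refine ⟨δ - β * μ, hε, 1, one_pos, fun t ht => ?_⟩
  rw [one_mul]
  refine norm_le_mul_exp_of_inner_deriv_le
    (f' := fun s => WithLp.toLp 2 (sisVectorField A β δ (p s)))
    (fun s hs => PiLp.hasDerivAt_of_forall_apply 2 (hode s hs)) (fun s hs => ?_) ht
  rw [EuclideanSpace.inner_eq_star_dotProduct, star_trivial, dotProduct_comm,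
    ← real_inner_self_eq_norm_sq, EuclideanSpace.inner_eq_star_dotProduct, star_trivial]
  exact dotProduct_sisVectorField_le_neg_mul δ hA hAnonneg hβ.le hμ fun i => (hrange s hs i).1

/-- **Exponential stability of the homogeneous N-intertwined SIS model.**
If `A` is the adjacency matrix of a simple undirected graph (symmetric, nonnegative,
zero diagonal), `β > 0`, `δ > 0`, and the largest eigenvalue of `A` satisfies
`λ₁(A) < δ/β` (i.e., every eigenvalue of the real symmetric matrix `A` is below
`δ/β`), then any solution `p` of the SIS dynamics with values in `[0,1]ⁿ`
converges to zero exponentially fast. -/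
theorem sis_homogeneous_exponential_stability
    {n : ℕ} (A : Matrix (Fin n) (Fin n) ℝ)
    (hA : A.IsHermitian) (hAnonneg : ∀ i j, 0 ≤ A i j) (hAdiag : ∀ i, A i i = 0)
    (β δ : ℝ) (hβ : 0 < β) (hδ : 0 < δ)
    (hspec : ∀ i, hA.eigenvalues i < δ / β)
    (p : ℝ → EuclideanSpace ℝ (Fin n))
    (hode : ∀ t ≥ (0 : ℝ), ∀ i, HasDerivAt (fun s => p s i)
      ((1 - p t i) * β * (∑ j, A i j * p t j) - δ * p t i) t)
    (hrange : ∀ t ≥ (0 : ℝ), ∀ i, p t i ∈ Set.Icc (0 : ℝ) 1) :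
    ∃ ε > (0 : ℝ), ∃ α > (0 : ℝ), ∀ t ≥ (0 : ℝ),
      ‖p t‖ ≤ α * ‖p 0‖ * Real.exp (-ε * t) :=
  sis_homogeneous_exponential_stability_general A hA hAnonneg β δ hβ hspec p hode hrange
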